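/- Explicit solution and uniform bound for the third equation of the Leading Order Model: let α>0 and let Λ:[0,T]×[0,∞)→ℝ be continuous. Then ξ(t,R,β) := 1 − exp(−(1/2α)∫₀ᵗ Λ(τ,R) dτ) satisfies, pointwise, ∂_tξ + (Λ(t,R)/2α) sin(2β) ∂_βξ = (Λ(t,R)/2α)(1−ξ), with ξ(0,R,β)=0. Moreover, if Λ≥0 then 0 ≤ ξ(t,R,β) < 1 for all (t,R,β), and if additionally ∫₀ᵗΛ(τ,R)dτ ≥ (2α/c₂)log(1+(c₂t/2α)c₀) for constants c₀,c₂>0 then ‖ξ(t)‖_{L∞} ≤ 1 + (1+c₂tc₀/(2α))^{−1/c₂} < 3. -/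

import Mathlib

open MeasureTheory Set Real

noncomputable section

def xiSol (α : ℝ) (Λ : ℝ → ℝ → ℝ) (t R _β : ℝ) : ℝ :=
  1 - Real.exp (-(1 / (2 * α)) * ∫ τ in (0:ℝ)..t, Λ τ R)

/-! The integrating factor `exp (-(1/2α) ∫₀ᵗ Λ)` does not depend on `β`, so the transport term
`sin (2β) ∂_β ξ` vanishes and the equation reduces to the linear ODE `∂_t ξ = (Λ/2α)(1 - ξ)` in `t`,
whose solution from `0` is `ξ`. For `Λ ≥ 0` the exponent is nonpositive, giving `0 ≤ ξ < 1`, and the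
`L∞` bound follows since `(1 + c₂ t c₀/2α)^(-1/c₂) ∈ [0, 1]`. -/

section

variable (α : ℝ) (Λ : ℝ → ℝ → ℝ)

theorem one_sub_xiSol (t R β : ℝ) :
    1 - xiSol α Λ t R β = Real.exp (-(1 / (2 * α)) * ∫ τ in (0:ℝ)..t, Λ τ R) := by
  simp only [xiSol, sub_sub_cancel]

@[simp]
theorem xiSol_zero (R β : ℝ) : xiSol α Λ 0 R β = 0 := by
  simp [xiSol]

theorem deriv_xiSol_angle (t R β : ℝ) : deriv (fun b => xiSol α Λ t R b) β = 0 :=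
  deriv_const β _

theorem hasDerivAt_xiSol_time {R : ℝ} (hΛ : Continuous fun τ => Λ τ R) (t β : ℝ) :
    HasDerivAt (fun t' => xiSol α Λ t' R β) (Λ t R / (2 * α) * (1 - xiSol α Λ t R β)) t := by
  have hI := (hΛ.integral_hasStrictDerivAt 0 t).hasDerivAt
  have hexp := ((hI.const_mul (-(1 / (2 * α)))).exp).const_sub 1
  refine hexp.congr_deriv ?_
  rw [one_sub_xiSol]
  ring

theorem xiSol_lt_one (t R β : ℝ) : xiSol α Λ t R β < 1 := by
  have := one_sub_xiSol α Λ t R β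
  linarith [Real.exp_pos (-(1 / (2 * α)) * ∫ τ in (0:ℝ)..t, Λ τ R)]

variable {α Λ}

theorem xiSol_nonneg (hα : 0 ≤ α) {t R : ℝ} (ht : 0 ≤ t) (hΛ : ∀ τ ∈ Icc 0 t, 0 ≤ Λ τ R)
    (β : ℝ) : 0 ≤ xiSol α Λ t R β := by
  have hI : 0 ≤ ∫ τ in (0:ℝ)..t, Λ τ R := intervalIntegral.integral_nonneg ht hΛ
  have hexp : Real.exp (-(1 / (2 * α)) * ∫ τ in (0:ℝ)..t, Λ τ R) ≤ 1 :=
    Real.exp_le_one_iff.mpr (mul_nonpos_of_nonpos_of_nonneg (neg_nonpos.mpr (by positivity)) hI)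
  linarith [one_sub_xiSol α Λ t R β]

theorem iSup_abs_xiSol_le_one (hα : 0 ≤ α) (hΛ : ∀ τ R, 0 ≤ Λ τ R) {t : ℝ} (ht : 0 ≤ t) :
    (⨆ p : ℝ × ℝ, |xiSol α Λ t p.1 p.2|) ≤ 1 :=
  ciSup_le fun p => abs_le.mpr
    ⟨by linarith [xiSol_nonneg hα ht (fun τ _ => hΛ τ p.1) p.2], (xiSol_lt_one α Λ t p.1 p.2).le⟩

end

theorem rpow_neg_mem_Icc_of_one_le {x c : ℝ} (hx : 1 ≤ x) (hc : 0 ≤ c) :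
    x ^ (-c) ∈ Icc 0 1 :=
  ⟨Real.rpow_nonneg (by linarith) _, Real.rpow_le_one_of_one_le_of_nonpos hx (neg_nonpos.mpr hc)⟩

/-- **Explicit solution and uniform bound for the third equation of the Leading Order
Model.**  `ξ(t,R,β) = 1 − exp(−(1/2α)∫₀ᵗΛ(τ,R)dτ)` solves
`∂_tξ + (Λ/2α) sin(2β) ∂_βξ = (Λ/2α)(1−ξ)` with `ξ(0)=0`; if `Λ ≥ 0` then `0 ≤ ξ < 1`,
and under the logarithmic lower bound on `∫₀ᵗΛ` one has
`‖ξ(t)‖_{L∞} ≤ 1 + (1+c₂tc₀/(2α))^{−1/c₂} < 3`. -/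
theorem xi_explicit_solution_and_bound
    (α : ℝ) (hα : 0 < α) (Λ : ℝ → ℝ → ℝ)
    (hΛ : Continuous fun p : ℝ × ℝ => Λ p.1 p.2) :
    (∀ t R β : ℝ,
      deriv (fun t' => xiSol α Λ t' R β) t
          + Λ t R / (2 * α) * Real.sin (2 * β) * deriv (fun b => xiSol α Λ t R b) β
        = Λ t R / (2 * α) * (1 - xiSol α Λ t R β) ∧
      xiSol α Λ 0 R β = 0) ∧
    ((∀ t R : ℝ, 0 ≤ Λ t R) →
      (∀ t R β : ℝ, 0 ≤ t → 0 ≤ xiSol α Λ t R β ∧ xiSol α Λ t R β < 1) ∧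
      ∀ c₀ c₂ : ℝ, 0 < c₀ → 0 < c₂ →
        (∀ R t : ℝ, 0 ≤ t →
          (2 * α / c₂) * Real.log (1 + (c₂ * t / (2 * α)) * c₀) ≤ ∫ τ in (0:ℝ)..t, Λ τ R) →
        ∀ t : ℝ, 0 ≤ t →
          (⨆ p : ℝ × ℝ, |xiSol α Λ t p.1 p.2|)
              ≤ 1 + (1 + c₂ * t * c₀ / (2 * α)) ^ (-(1 / c₂)) ∧
          1 + (1 + c₂ * t * c₀ / (2 * α)) ^ (-(1 / c₂)) < 3) := by
  refine ⟨fun t R β => ⟨?_, xiSol_zero α Λ R β⟩, fun hΛpos => ⟨?_, ?_⟩⟩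
  · have hΛR : Continuous fun τ => Λ τ R := hΛ.comp (continuous_id.prodMk continuous_const)
    rw [(hasDerivAt_xiSol_time α Λ hΛR t β).deriv, deriv_xiSol_angle, mul_zero, add_zero]
  · exact fun t R β ht => ⟨xiSol_nonneg hα.le ht (fun τ _ => hΛpos τ R) β, xiSol_lt_one α Λ t R β⟩
  · intro c₀ c₂ hc₀ hc₂ _ t ht
    have hbase : 1 ≤ 1 + c₂ * t * c₀ / (2 * α) := le_add_of_nonneg_right (by positivity)
    obtain ⟨hpow₀, hpow₁⟩ := rpow_neg_mem_Icc_of_one_le hbase (one_div_pos.mpr hc₂).le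
    exact ⟨(iSup_abs_xiSol_le_one hα.le hΛpos ht).trans (le_add_of_nonneg_right hpow₀),
      by linarith⟩
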